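/- Let $p$ be a prime, let $s \ge 1$ be an integer, and let $V_1, \ldots, V_s$ be real numbers with $p > V_i \ge 1$ for all $i$ and $V_1 \cdots V_s > p^{s-1}$. Then for any integers $b_1, \ldots, b_s$ there exists an integer $v$ with $\gcd(v, p) = 1$ such that $\langle b_i v \rangle_p \le V_i$ for each $i = 1, \ldots, s$. -/

import Mathlib

/-!
Scale by a large integer `N` and apply the pigeonhole principle modulo `N p` to the `p ∏ ⌊N V_i⌋`
points `N b v + t` with `0 ≤ v < p` and `0 ≤ t_i < ⌊N V_i⌋`. Since `⌊N V_i⌋ / N → V_i` and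
`∏ V_i > p^{s-1}`, for large `N` there are more points than the `(N p)^s` residue classes, and the
difference of two colliding points gives `0 < |v| < p` with `|N b_i v - k_i N p| < ⌊N V_i⌋ ≤ N V_i`.
-/

open Filter Topology Finset

theorem exists_ne_zero_forall_abs_mul_sub_lt {s : ℕ} (q L : ℕ) (hq : 0 < q) (a : Fin s → ℤ)
    (M : Fin s → ℕ) (hMq : ∀ i, M i ≤ q) (hcard : q ^ s < L * ∏ i, M i) :
    ∃ w : ℤ, w ≠ 0 ∧ |w| < L ∧ ∀ i, ∃ k : ℤ, |a i * w - k * q| < M i := by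
  classical
  have : NeZero q := ⟨hq.ne'⟩
  let f : ℕ × (Fin s → ℕ) → Fin s → ZMod q := fun x i => ((a i * x.1 + x.2 i : ℤ) : ZMod q)
  have hcard' : #(univ : Finset (Fin s → ZMod q)) <
      #(range L ×ˢ Fintype.piFinset fun i => range (M i)) := by
    simpa [Fintype.card_piFinset, ZMod.card] using hcard
  obtain ⟨⟨v, t⟩, hx, ⟨v', t'⟩, hy, hne, hf⟩ :=
    exists_ne_map_eq_of_card_lt_of_maps_to hcard' fun x _ => mem_univ (f x)
  simp only [mem_product, mem_range, Fintype.mem_piFinset] at hx hy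
  have hdvd : ∀ i, (q : ℤ) ∣ a i * ((v : ℤ) - v') + ((t i : ℤ) - t' i) := by
    intro i
    rw [show a i * ((v : ℤ) - v') + ((t i : ℤ) - t' i) =
      -((a i * v' + t' i) - (a i * v + t i)) by ring, dvd_neg]
    exact (ZMod.intCast_eq_intCast_iff_dvd_sub _ _ _).1 (congrFun hf i)
  have hsmall : ∀ i, |(t i : ℤ) - t' i| < M i := fun i => by
    have := hx.2 i
    have := hy.2 i
    rw [abs_lt]
    constructor <;> omega
  refine ⟨v - v', fun hw => hne ?_, by rw [abs_lt]; constructor <;> omega, fun i => ?_⟩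
  · have ht : t = t' := funext fun i => by
      have h := hdvd i
      rw [hw, mul_zero, zero_add] at h
      have := Int.eq_zero_of_abs_lt_dvd h ((hsmall i).trans_le (by exact_mod_cast hMq i))
      omega
    rw [ht, show v = v' by omega]
  · obtain ⟨k, hk⟩ := hdvd i
    refine ⟨k, ?_⟩
    rw [show a i * (v - v') - k * q = -((t i : ℤ) - t' i) by linarith, abs_neg]
    exact hsmall i

theorem eventually_pow_mul_lt_prod_floor_mul {ι : Type*} [Fintype ι] {V : ι → ℝ}
    (hV : ∀ i, 0 ≤ V i) {C : ℝ} (hC : C < ∏ i, V i) :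
    ∀ᶠ N : ℕ in atTop, (N : ℝ) ^ Fintype.card ι * C < ∏ i, (⌊V i * N⌋₊ : ℝ) := by
  have hlim : Tendsto (fun N : ℕ => ∏ i, (⌊V i * N⌋₊ : ℝ) / N) atTop (𝓝 (∏ i, V i)) :=
    tendsto_finsetProd _ fun i _ =>
      (tendsto_nat_floor_mul_div_atTop (hV i)).comp tendsto_natCast_atTop_atTop
  filter_upwards [hlim.eventually (lt_mem_nhds hC), eventually_gt_atTop 0] with N hN hN0
  rw [prod_div_distrib, prod_const, card_univ, lt_div_iff₀ (by positivity)] at hN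
  linarith

theorem Int.gcd_natCast_eq_one_of_abs_lt {p : ℕ} (hp : p.Prime) {w : ℤ} (hw0 : w ≠ 0)
    (hwp : |w| < p) : Int.gcd w p = 1 := by
  rw [Int.abs_eq_natAbs] at hwp
  have hwp' : w.natAbs < p := by exact_mod_cast hwp
  rw [Int.gcd, Int.natAbs_natCast]
  exact Nat.coprime_comm.1 <| (hp.coprime_iff_not_dvd).2 fun h =>
    (Nat.le_of_dvd (Int.natAbs_pos.2 hw0) h).not_gt hwp'

theorem exists_pos_pow_mul_lt_mul_prod_floor {s p : ℕ} (hp : 0 < p) {V : Fin s → ℝ}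
    (hV : ∀ i, 0 ≤ V i) (hprod : (p : ℝ) ^ (s - 1) < ∏ i, V i) :
    ∃ N : ℕ, 0 < N ∧ (N * p) ^ s < p * ∏ i, ⌊V i * N⌋₊ := by
  obtain ⟨N, hN, hN0⟩ :=
    ((eventually_pow_mul_lt_prod_floor_mul hV hprod).and (eventually_gt_atTop 0)).exists
  rw [Fintype.card_fin] at hN
  refine ⟨N, hN0, ?_⟩
  have hps : (p : ℝ) ^ s ≤ p * p ^ (s - 1) := by
    rw [← pow_succ']
    exact pow_le_pow_right₀ (by exact_mod_cast hp) (by omega)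
  have : ((N : ℝ) * p) ^ s < p * ∏ i, (⌊V i * N⌋₊ : ℝ) :=
    calc ((N : ℝ) * p) ^ s ≤ N ^ s * (p * p ^ (s - 1)) := by rw [mul_pow]; gcongr
      _ = p * (N ^ s * p ^ (s - 1)) := by ring
      _ < p * ∏ i, (⌊V i * N⌋₊ : ℝ) := by gcongr
  exact_mod_cast this

theorem stmt_4_general (p : ℕ) (hp : p.Prime) (s : ℕ)
    (V : Fin s → ℝ) (hV1 : ∀ i, 1 ≤ V i) (hVp : ∀ i, V i < p)
    (hprod : (p : ℝ) ^ (s - 1) < ∏ i, V i)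
    (b : Fin s → ℤ) :
    ∃ v : ℤ, Int.gcd v p = 1 ∧ ∀ i, ∃ k : ℤ, |((b i * v - k * p : ℤ) : ℝ)| ≤ V i := by
  have hV0 : ∀ i, 0 ≤ V i := fun i => zero_le_one.trans (hV1 i)
  obtain ⟨N, hN0, hcard⟩ := exists_pos_pow_mul_lt_mul_prod_floor hp.pos hV0 hprod
  have hMq : ∀ i, ⌊V i * N⌋₊ ≤ N * p := fun i => Nat.floor_le_of_le <| by
    rw [Nat.cast_mul, mul_comm (N : ℝ)]
    exact mul_le_mul_of_nonneg_right (hVp i).le N.cast_nonneg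
  obtain ⟨w, hw0, hwp, hw⟩ := exists_ne_zero_forall_abs_mul_sub_lt (N * p) p
    (Nat.mul_pos hN0 hp.pos) (fun i => N * b i) _ hMq hcard
  refine ⟨w, Int.gcd_natCast_eq_one_of_abs_lt hp hw0 hwp, fun i => ?_⟩
  obtain ⟨k, hk⟩ := hw i
  refine ⟨k, le_of_lt ?_⟩
  have hscaled : (N : ℤ) * |b i * w - k * p| < ⌊V i * N⌋₊ :=
    calc (N : ℤ) * |b i * w - k * p| = |N * (b i * w - k * p)| := by
          rw [abs_mul, Nat.abs_cast]
      _ = |N * b i * w - k * (N * p : ℕ)| := by push_cast; ring_nf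
      _ < ⌊V i * N⌋₊ := hk
  have : (N : ℝ) * |((b i * w - k * p : ℤ) : ℝ)| < N * V i := by
    rw [mul_comm (N : ℝ) (V i)]
    exact lt_of_lt_of_le (by exact_mod_cast hscaled)
      (Nat.floor_le (mul_nonneg (hV0 i) N.cast_nonneg))
  exact lt_of_mul_lt_mul_left this N.cast_nonneg

/-- Small values of linear functions modulo `p`: given reals `1 ≤ V_i < p` with
`V_1 ⋯ V_s > p^{s-1}` and integers `b_1, …, b_s`, there is an integer `v` coprime to `p`
such that the minimal absolute residue of `b_i v` modulo `p` is at most `V_i` for every `i`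
(expressed as: there exists `k ∈ ℤ` with `|b_i v - k p| ≤ V_i`). -/
theorem stmt_4 (p : ℕ) (hp : p.Prime) (s : ℕ) (hs : 1 ≤ s)
    (V : Fin s → ℝ) (hV1 : ∀ i, 1 ≤ V i) (hVp : ∀ i, V i < p)
    (hprod : (p : ℝ) ^ (s - 1) < ∏ i, V i)
    (b : Fin s → ℤ) :
    ∃ v : ℤ, Int.gcd v p = 1 ∧ ∀ i, ∃ k : ℤ, |((b i * v - k * p : ℤ) : ℝ)| ≤ V i :=
  stmt_4_general p hp s V hV1 hVp hprod b
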